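/- Let $A \in \mathbb{C}^{n \times n}$ be an irreducible Hermitian positive semidefinite matrix all of whose nonzero entries have modulus $1$. Then every entry of $A$ is nonzero; in particular no diagonal entry of $A$ is zero. -/

import Mathlib

/-!
A zero diagonal entry of a positive semidefinite matrix kills its whole row, so irreducibility
forces every diagonal entry to be nonzero, hence (being nonnegative of modulus one) equal to `1`.
The relation `A i j ≠ 0` is then transitive: if `‖A i j‖ = ‖A j k‖ = 1` but `A i k = 0`, the
principal minor on `{i, j, k}` equals `1 - 1 - 1 = -1 < 0`. A transitive, strongly connected
relation is total.
-/

open scoped ComplexOrder Matrix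

namespace Matrix.PosSemidef

variable {ι : Type*} {A : Matrix ι ι ℂ}

theorem apply_eq_zero_of_diag_eq_zero [Fintype ι] (hA : A.PosSemidef) {i : ι} (hi : A i i = 0)
    (j : ι) : A i j = 0 := by
  classical
  have hcol : A *ᵥ Pi.single i 1 = 0 :=
    (hA.dotProduct_mulVec_zero_iff _).mp (by simpa [mulVec_single, dotProduct_single] using hi)
  have hji : A j i = 0 := by simpa [mulVec_single] using congrFun hcol j
  rw [← hA.isHermitian.apply i j, hji, star_zero]

theorem diag_eq_one_of_norm_eq_one (hA : A.PosSemidef) {i : ι} (hi : ‖A i i‖ = 1) : A i i = 1 := by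
  rw [Complex.eq_coe_norm_of_nonneg hA.diag_nonneg, hi, Complex.ofReal_one]

theorem apply_ne_zero_of_norm_eq_one (hA : A.PosSemidef) {i j k : ι} (hi : A i i = 1)
    (hj : A j j = 1) (hk : A k k = 1) (hij : ‖A i j‖ = 1) (hjk : ‖A j k‖ = 1) : A i k ≠ 0 := by
  intro hik
  have hconj : ∀ a b, A b a = star (A a b) := fun a b => (hA.isHermitian.apply b a).symm
  have hunit : ∀ z : ℂ, ‖z‖ = 1 → z * star z = 1 := fun z hz => by
    rw [Complex.star_def, Complex.mul_conj, Complex.normSq_eq_norm_sq, hz]; norm_num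
  have hminor : (A.submatrix ![i, j, k] ![i, j, k]).det = -1 := by
    rw [det_fin_three]
    simp only [submatrix_apply, cons_val_zero, cons_val_one, cons_val_two, head_cons, tail_cons,
      hi, hj, hk, hik, hconj i j, hconj j k, hconj i k, star_zero]
    linear_combination (-1 : ℂ) * hunit _ hij - hunit _ hjk
  have := (hA.submatrix ![i, j, k]).det_nonneg
  rw [hminor] at this
  norm_num at this

end Matrix.PosSemidef

/-- An irreducible Hermitian positive semidefinite matrix whose nonzero entries all
have modulus `1` has no zero entries at all (in particular no zero diagonal entries).
Irreducibility is stated as strong connectivity of the digraph with an edge `i → j`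
whenever `A i j ≠ 0`. -/
theorem stmt10 (n : ℕ) (A : Matrix (Fin n) (Fin n) ℂ) (hA : A.PosSemidef)
    (h : ∀ i j, A i j ≠ 0 → ‖A i j‖ = 1)
    (hirr : ∀ i j : Fin n, Relation.TransGen (fun a b => A a b ≠ 0) i j) :
    ∀ i j, A i j ≠ 0 := by
  have hdiag : ∀ i, A i i = 1 := fun i => by
    obtain ⟨b, hib, -⟩ := Relation.TransGen.head'_iff.mp (hirr i i)
    have hii : A i i ≠ 0 := fun hii => hib (hA.apply_eq_zero_of_diag_eq_zero hii b)
    exact hA.diag_eq_one_of_norm_eq_one (h i i hii)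
  have : IsTrans (Fin n) (fun a b => A a b ≠ 0) := ⟨fun i j k hij hjk =>
    hA.apply_ne_zero_of_norm_eq_one (hdiag i) (hdiag j) (hdiag k) (h i j hij) (h j k hjk)⟩
  simpa only [Relation.transGen_eq_self] using hirr
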